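/- Let h : G ↷ H be an actor between étale groupoids, and let U ⊆ G and V ⊆ H be open bisections. Then the set U·V = {γ·x : γ ∈ U, x ∈ V, s(γ) = ρ(x)} is an open bisection of H, and every y ∈ U·V has a unique representation y = γ·x with (γ, x) ∈ U ×_{s,ρ} V. -/

import Mathlib

open Topology

/-- A topological groupoid: a set with a partially defined multiplication
(`D a b` expresses composability), an inversion, satisfying the groupoid
axioms, such that inversion is continuous and multiplication is continuous
on the set of composable pairs. -/
structure TopGroupoid (G : Type*) [TopologicalSpace G] where
  /-- composability -/
  D : G → G → Prop
  /-- partially defined multiplication (junk values off `D`) -/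
  comp : G → G → G
  /-- inversion -/
  inv : G → G
  inv_inv : ∀ g, inv (inv g) = g
  d_inv : ∀ g, D g (inv g)
  d_eq : ∀ a b, D a b ↔ comp (inv a) a = comp b (inv b)
  d_comp_left : ∀ {a b c}, D a b → D b c → D (comp a b) c
  d_comp_right : ∀ {a b c}, D a b → D b c → D a (comp b c)
  assoc : ∀ {a b c}, D a b → D b c → comp (comp a b) c = comp a (comp b c)
  cancel_left : ∀ {g h}, D g h → comp (inv g) (comp g h) = h
  cancel_right : ∀ {g h}, D g h → comp (comp g h) (inv h) = g
  continuous_inv : Continuous inv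
  continuousOn_comp : ContinuousOn (fun p : G × G => comp p.1 p.2) {p | D p.1 p.2}

namespace TopGroupoid

variable {G : Type*} [TopologicalSpace G]

/-- The source map `s(γ) = γ⁻¹γ`. -/
def src (S : TopGroupoid G) (g : G) : G := S.comp (S.inv g) g

/-- The range map `r(γ) = γγ⁻¹`. -/
def rng (S : TopGroupoid G) (g : G) : G := S.comp g (S.inv g)

/-- The unit space `G⁽⁰⁾ = {γ⁻¹γ : γ ∈ G}`. -/
def unitSpace (S : TopGroupoid G) : Set G := Set.range S.src

/-- A groupoid is étale if its range map is a local homeomorphism. -/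
def IsEtale (S : TopGroupoid G) : Prop := IsLocalHomeomorph S.rng

/-- An open bisection: an open set on which both the source and the range map
are injective (hence, in an étale groupoid, restrict to homeomorphisms onto
their open images). -/
def IsOpenBisection (S : TopGroupoid G) (U : Set G) : Prop :=
  IsOpen U ∧ Set.InjOn S.src U ∧ Set.InjOn S.rng U

/-- Pointwise product of subsets: `U·V = {γη : γ ∈ U, η ∈ V, s γ = r η}`. -/
def setMul (S : TopGroupoid G) (U V : Set G) : Set G :=
  {g | ∃ a ∈ U, ∃ b ∈ V, S.D a b ∧ g = S.comp a b}

/-- Pointwise inverse of a subset: `U⁻¹ = {γ⁻¹ : γ ∈ U}`. -/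
def setInv (S : TopGroupoid G) (U : Set G) : Set G := S.inv '' U

end TopGroupoid

/-- An actor `G ↷ H`: a continuous left action of `G` on `H` (with anchor map
`ρ : H → G⁽⁰⁾`) which commutes with the right multiplication of `H` on itself. -/
structure Actor {G : Type*} {H : Type*} [TopologicalSpace G] [TopologicalSpace H]
    (S : TopGroupoid G) (T : TopGroupoid H) where
  /-- the anchor map -/
  rho : H → G
  /-- the action multiplication, partially defined (junk off `s γ = ρ x`) -/
  act : G → H → H
  rho_mem : ∀ x, rho x ∈ S.unitSpace
  continuous_rho : Continuous rho
  continuousOn_act :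
    ContinuousOn (fun p : G × H => act p.1 p.2) {p | S.src p.1 = rho p.2}
  rho_act : ∀ {γ x}, S.src γ = rho x → rho (act γ x) = S.rng γ
  act_assoc : ∀ {γ₁ γ₂ x}, S.D γ₁ γ₂ → S.src γ₂ = rho x →
      act γ₁ (act γ₂ x) = act (S.comp γ₁ γ₂) x
  act_unit : ∀ x, act (rho x) x = x
  rho_comp : ∀ {x y}, T.D x y → rho (T.comp x y) = rho x
  src_act : ∀ {γ x}, S.src γ = rho x → T.src (act γ x) = T.src x
  act_right : ∀ {γ x y}, S.src γ = rho x → T.D x y →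
      act γ (T.comp x y) = T.comp (act γ x) y

namespace Actor

variable {G H : Type*} [TopologicalSpace G] [TopologicalSpace H]
variable {S : TopGroupoid G} {T : TopGroupoid H}

/-- An actor is free if the only arrows fixing a unit are units. -/
def Free (A : Actor S T) : Prop :=
  ∀ t ∈ T.unitSpace, ∀ γ : G, S.src γ = A.rho t → A.act γ t = t → γ ∈ S.unitSpace

/-- An actor is proper if the anchor map restricted to the unit space of `H`
is a proper map. -/
def Proper (A : Actor S T) : Prop := IsProperMap (T.unitSpace.restrict A.rho)

/-- `U·V = {γ·x : γ ∈ U, x ∈ V, s γ = ρ x}`. -/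
def actSet (A : Actor S T) (U : Set G) (V : Set H) : Set H :=
  {y | ∃ γ ∈ U, ∃ x ∈ V, S.src γ = A.rho x ∧ y = A.act γ x}

end Actor

namespace TopGroupoid

variable {G : Type*} [TopologicalSpace G] (S : TopGroupoid G)

lemma d_inv_left (g : G) : S.D (S.inv g) g := by
  rw [S.d_eq, S.inv_inv]

lemma src_inv (g : G) : S.src (S.inv g) = S.rng g := by
  rw [src, rng, S.inv_inv]

lemma rng_inv (g : G) : S.rng (S.inv g) = S.src g := by
  rw [src, rng, S.inv_inv]

lemma rng_comp {a b : G} (h : S.D a b) : S.rng (S.comp a b) = S.rng a := by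
  have h' := (S.d_eq _ _).mp (S.d_comp_right (S.d_inv_left a) h)
  rw [S.inv_inv] at h'
  exact h'.symm

lemma src_comp {a b : G} (h : S.D a b) : S.src (S.comp a b) = S.src b := by
  have h' := (S.d_eq _ _).mp (S.d_comp_left h (S.d_inv b))
  rwa [S.inv_inv] at h'

lemma rng_comp_self (g : G) : S.comp (S.rng g) g = g := by
  have h := S.cancel_right (S.d_inv g)
  rwa [S.inv_inv] at h

lemma src_rng (g : G) : S.src (S.rng g) = S.rng g :=
  (S.src_comp (S.d_inv g)).trans (S.src_inv g)

lemma d_rng_left (g : G) : S.D (S.rng g) g :=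
  (S.d_eq _ _).mpr (S.src_rng g)

end TopGroupoid

namespace Actor

variable {G H : Type*} [TopologicalSpace G] [TopologicalSpace H]
variable {S : TopGroupoid G} {T : TopGroupoid H} (A : Actor S T)

lemma rho_rng (y : H) : A.rho (T.rng y) = A.rho y := by
  simpa only [T.rng_comp_self] using (A.rho_comp (T.d_rng_left y)).symm

lemma act_inv_act {γ : G} {x : H} (h : S.src γ = A.rho x) :
    A.act (S.inv γ) (A.act γ x) = x := by
  rw [A.act_assoc (S.d_inv_left γ) h]
  change A.act (S.src γ) x = x
  rw [h, A.act_unit]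

lemma act_act_inv {γ : G} {y : H} (h : S.rng γ = A.rho y) :
    A.act γ (A.act (S.inv γ) y) = y := by
  rw [A.act_assoc (S.d_inv γ) (by rwa [S.src_inv])]
  change A.act (S.rng γ) y = y
  rw [h, A.act_unit]

/-- Since `γ·x = (γ·r(x))·x`, the range of `γ·x` only depends on `γ` and `r(x)`. -/
lemma rng_act {γ : G} {x : H} (h : S.src γ = A.rho x) :
    T.rng (A.act γ x) = T.rng (A.act γ (T.rng x)) := by
  have hr : S.src γ = A.rho (T.rng x) := by rw [A.rho_rng, h]
  have hd : T.D (A.act γ (T.rng x)) x :=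
    (T.d_eq _ _).mpr ((A.src_act hr).trans (T.src_rng x))
  conv_lhs => rw [← T.rng_comp_self x, A.act_right hr (T.d_rng_left x)]
  exact T.rng_comp hd

lemma rng_eq_of_rng_act_eq {γ : G} {x x' : H} (hx : S.src γ = A.rho x)
    (hx' : S.src γ = A.rho x') (h : T.rng (A.act γ x) = T.rng (A.act γ x')) :
    T.rng x = T.rng x' := by
  have hy : ∀ {z}, S.src γ = A.rho z → S.src (S.inv γ) = A.rho (A.act γ z) := fun hz => by
    rw [S.src_inv, A.rho_act hz]
  rw [← A.act_inv_act hx, ← A.act_inv_act hx', A.rng_act (hy hx), A.rng_act (hy hx'), h]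

variable {U : Set G} {V : Set H}

lemma eq_of_src_act_eq (hU : Set.InjOn S.src U) (hV : Set.InjOn T.src V)
    {γ γ' : G} {x x' : H} (hγ : γ ∈ U) (hγ' : γ' ∈ U) (hx : x ∈ V) (hx' : x' ∈ V)
    (hc : S.src γ = A.rho x) (hc' : S.src γ' = A.rho x')
    (h : T.src (A.act γ x) = T.src (A.act γ' x')) : γ = γ' ∧ x = x' := by
  obtain rfl : x = x' := hV hx hx' (by rwa [A.src_act hc, A.src_act hc'] at h)
  exact ⟨hU hγ hγ' (hc.trans hc'.symm), rfl⟩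

lemma injOn_src_actSet (hU : Set.InjOn S.src U) (hV : Set.InjOn T.src V) :
    Set.InjOn T.src (A.actSet U V) := by
  rintro _ ⟨γ, hγ, x, hx, hc, rfl⟩ _ ⟨γ', hγ', x', hx', hc', rfl⟩ h
  obtain ⟨rfl, rfl⟩ := A.eq_of_src_act_eq hU hV hγ hγ' hx hx' hc hc' h
  rfl

lemma injOn_rng_actSet (hU : Set.InjOn S.rng U) (hV : Set.InjOn T.rng V) :
    Set.InjOn T.rng (A.actSet U V) := by
  rintro _ ⟨γ, hγ, x, hx, hc, rfl⟩ _ ⟨γ', hγ', x', hx', hc', rfl⟩ h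
  obtain rfl : γ = γ' := hU hγ hγ' <| by
    rw [← A.rho_act hc, ← A.rho_act hc', ← A.rho_rng, h, A.rho_rng]
  rw [hV hx hx' (A.rng_eq_of_rng_act_eq hc hc' h)]

lemma mem_actSet_of_act_inv_mem {γ : G} {y : H} (hγ : γ ∈ U) (hy : S.rng γ = A.rho y)
    (hV : A.act (S.inv γ) y ∈ V) : y ∈ A.actSet U V := by
  refine ⟨γ, hγ, _, hV, ?_, (A.act_act_inv hy).symm⟩
  rw [A.rho_act (by rwa [S.src_inv]), S.rng_inv]

/-- Near `γ₀·x₀`, a local inverse `σ` of the range map of `G` recovers the factorisation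
`y = σ(ρ y)·(σ(ρ y)⁻¹·y)` continuously in `y`; `U·V` contains the open set of those `y`
whose two factors lie in `U` and `V`. -/
lemma isOpen_actSet (hS : S.IsEtale) (hU : IsOpen U) (hV : IsOpen V) :
    IsOpen (A.actSet U V) := by
  refine isOpen_iff_forall_mem_open.mpr ?_
  rintro _ ⟨γ₀, hγ₀, x₀, hx₀, hc₀, rfl⟩
  obtain ⟨e, he, hrng⟩ := hS γ₀
  set σ : H → G := fun y => e.symm (A.rho y)
  set W : Set H := A.rho ⁻¹' e.target
  have hσ : ∀ y ∈ W, S.rng (σ y) = A.rho y := fun y hy => by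
    rw [hrng]; exact e.right_inv hy
  have hσ_cont : ContinuousOn σ W :=
    e.continuousOn_symm.comp A.continuous_rho.continuousOn fun _ hy => hy
  have hfactor_cont : ContinuousOn (fun y => (σ y, A.act (S.inv (σ y)) y)) W :=
    hσ_cont.prodMk <| A.continuousOn_act.comp
      ((S.continuous_inv.comp_continuousOn hσ_cont).prodMk continuousOn_id)
      fun y hy => (S.src_inv _).trans (hσ y hy)
  have hσ₀ : σ (A.act γ₀ x₀) = γ₀ := by
    simp only [σ, A.rho_act hc₀, hrng]; exact e.left_inv he
  refine ⟨W ∩ (fun y => (σ y, A.act (S.inv (σ y)) y)) ⁻¹' (U ×ˢ V), ?_,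
    hfactor_cont.isOpen_inter_preimage (e.open_target.preimage A.continuous_rho)
      (hU.prod hV), ?_⟩
  · rintro y ⟨hyW, hσU, hσV⟩
    exact A.mem_actSet_of_act_inv_mem hσU (hσ y hyW) hσV
  · refine ⟨?_, ?_, ?_⟩
    · simp only [W, Set.mem_preimage, A.rho_act hc₀, hrng]; exact e.map_source he
    · simpa only [hσ₀] using hγ₀
    · simpa only [hσ₀, A.act_inv_act hc₀] using hx₀

end Actor

theorem actSet_isOpenBisection_general {G H : Type*} [TopologicalSpace G] [TopologicalSpace H]
    {S : TopGroupoid G} {T : TopGroupoid H} (hS : S.IsEtale)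
    (A : Actor S T) (U : Set G) (V : Set H)
    (hU : S.IsOpenBisection U) (hV : T.IsOpenBisection V) :
    T.IsOpenBisection (A.actSet U V) ∧
    ∀ y ∈ A.actSet U V, ∃! p : G × H,
      p.1 ∈ U ∧ p.2 ∈ V ∧ S.src p.1 = A.rho p.2 ∧ y = A.act p.1 p.2 := by
  refine ⟨⟨A.isOpen_actSet hS hU.1 hV.1, A.injOn_src_actSet hU.2.1 hV.2.1,
    A.injOn_rng_actSet hU.2.2 hV.2.2⟩, ?_⟩
  rintro _ ⟨γ, hγ, x, hx, hc, rfl⟩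
  refine ⟨(γ, x), ⟨hγ, hx, hc, rfl⟩, ?_⟩
  rintro ⟨γ', x'⟩ ⟨hγ', hx', hc', h⟩
  obtain ⟨rfl, rfl⟩ :=
    A.eq_of_src_act_eq hU.2.1 hV.2.1 hγ' hγ hx' hx hc' hc (congrArg T.src h.symm)
  rfl

/-- For an actor `h : G ↷ H` between étale groupoids and open bisections
`U ⊆ G`, `V ⊆ H`, the set `U·V = {γ·x : γ ∈ U, x ∈ V, s γ = ρ x}` is an open
bisection of `H`, and every element of `U·V` has a unique representation
`γ·x` with `(γ, x) ∈ U ×_{s,ρ} V`. -/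
theorem actSet_isOpenBisection {G H : Type*} [TopologicalSpace G] [TopologicalSpace H]
    {S : TopGroupoid G} {T : TopGroupoid H} (hS : S.IsEtale) (hT : T.IsEtale)
    (A : Actor S T) (U : Set G) (V : Set H)
    (hU : S.IsOpenBisection U) (hV : T.IsOpenBisection V) :
    T.IsOpenBisection (A.actSet U V) ∧
    ∀ y ∈ A.actSet U V, ∃! p : G × H,
      p.1 ∈ U ∧ p.2 ∈ V ∧ S.src p.1 = A.rho p.2 ∧ y = A.act p.1 p.2 :=
  actSet_isOpenBisection_general hS A U V hU hV
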